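/- Exact improvement formula: assume d_{π₊}(s) < ∞ for every nonterminal state s. Then ρ(π₊) − ρ(π0) = Σ_{s nonterminal} d_{π₊}(s)·V_{π0}(s)·I(s). -/

import Mathlib

open MeasureTheory
open scoped ENNReal

/-- A pmf on a finite type, as a real-valued function. -/
def IsPMFOn {α : Type*} [Fintype α] (p : α → ℝ) : Prop :=
  (∀ x, 0 ≤ p x) ∧ ∑ x, p x = 1

/-- A terminated trajectory of an episodic MDP: the initial state together with the
list of (action, next-state) steps, recorded up to the first visit to a terminal
state.  Under almost-sure termination this is a faithful (countable) sample space
for the Ionescu–Tulcea law of the chain, terminal states being absorbing. -/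
structure Traj (S A : Type*) where
  init : S
  steps : List (A × S)

instance {S A : Type*} : MeasurableSpace (Traj S A) := ⊤

variable {S A : Type*}

/-- The last recorded state of a trajectory. -/
def lastState (ω : Traj S A) : S := ω.steps.foldl (fun _ p => p.2) ω.init

/-- The state `Xₜ` at time `t` (after termination the chain is absorbed, so we
return the last recorded state). -/
def stateAt (ω : Traj S A) (t : ℕ) : S :=
  (ω.init :: ω.steps.map Prod.snd).getD t (lastState ω)

/-- The action `Aₜ` at time `t`, defined (as `some a`) for `t` before the
termination time. -/
def actionAt (ω : Traj S A) (t : ℕ) : Option A := ω.steps[t]?.map Prod.fst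

/-- Probability weight of a path started at `s`: the product of the policy and
transition probabilities along the path, the path being required to stop exactly
on first reaching the terminal set `Term`. -/
def pathWeight [DecidableEq S] (Term : Finset S) (P : S → A → S → ℝ)
    (π : S → A → ℝ) : S → List (A × S) → ℝ
  | s, [] => if s ∈ Term then 1 else 0
  | s, (a, s') :: l =>
      if s ∈ Term then 0 else π s a * P s a s' * pathWeight Term P π s' l

/-- The law `ℙ_{π,μ}` of the episodic chain `X₀ ~ μ, Aₜ ~ π(·|Xₜ),
X_{t+1} ~ P(·|Xₜ,Aₜ)` with terminal set `Term`, as a measure on terminated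
trajectories.  When the chain reaches `Term` almost surely this is a probability
measure and is the (pushforward of the) Ionescu–Tulcea trajectory law. -/
noncomputable def trajMeasure [DecidableEq S] (Term : Finset S) (P : S → A → S → ℝ)
    (π : S → A → ℝ) (μ : S → ℝ) : Measure (Traj S A) :=
  Measure.sum fun ω : Traj S A =>
    ENNReal.ofReal (μ ω.init * pathWeight Term P π ω.init ω.steps) • Measure.dirac ω

/-- The success event `{∃ t, Xₜ ∈ 𝒯₊}`. -/
def SuccessEvent (Tp : Finset S) : Set (Traj S A) := {ω | ∃ t, stateAt ω t ∈ Tp}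

/-- The point mass at `s`, as an initial distribution. -/
def pointMass [DecidableEq S] (s : S) : S → ℝ := fun s' => if s' = s then 1 else 0

/-- The value `V_π(s) := ℙ_{π,s}(∃ t, Xₜ ∈ 𝒯₊)`. -/
noncomputable def Vval [DecidableEq S] (Term Tp : Finset S) (P : S → A → S → ℝ)
    (π : S → A → ℝ) (s : S) : ℝ :=
  (trajMeasure Term P π (pointMass s) (SuccessEvent Tp)).toReal

/-- The Q-value `Q_π(s,a) := Σ_{s'} P(s'|s,a)·V_π(s')`. -/
noncomputable def Qval [Fintype S] [DecidableEq S] (Term Tp : Finset S)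
    (P : S → A → S → ℝ) (π : S → A → ℝ) (s : S) (a : A) : ℝ :=
  ∑ s', P s a s' * Vval Term Tp P π s'

/-- The success-conditioned policy `π₊(a|s) := π0(a|s)·Q_{π0}(s,a)/V_{π0}(s)`. -/
noncomputable def piPlus [Fintype S] [DecidableEq S] (Term Tp : Finset S)
    (P : S → A → S → ℝ) (π0 : S → A → ℝ) : S → A → ℝ :=
  fun s a => π0 s a * Qval Term Tp P π0 s a / Vval Term Tp P π0 s

/-- The action-influence
`I(s) := Σ_a π0(a|s)·((Q_{π0}(s,a) − V_{π0}(s))/V_{π0}(s))²`. -/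
noncomputable def influence [Fintype S] [DecidableEq S] [Fintype A] (Term Tp : Finset S)
    (P : S → A → S → ℝ) (π0 : S → A → ℝ) (s : S) : ℝ :=
  ∑ a, π0 s a * ((Qval Term Tp P π0 s a - Vval Term Tp P π0 s)
      / Vval Term Tp P π0 s) ^ 2

/-- The occupancy measure `d_π(s) := Σ_{t≥0} ℙ_{π,μ}(Xₜ = s)` (in `ℝ≥0∞`). -/
noncomputable def dOcc [DecidableEq S] (Term : Finset S) (P : S → A → S → ℝ)
    (π : S → A → ℝ) (μ : S → ℝ) (s : S) : ℝ≥0∞ :=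
  ∑' t : ℕ, trajMeasure Term P π μ {ω | stateAt ω t = s}

/-- The success-conditioned occupancy
`d⁺_π(s) := 𝔼_{π,μ}[Σ_{t≥0} 1(Xₜ = s) | ∃ t, Xₜ ∈ 𝒯₊]` (in `ℝ≥0∞`). -/
noncomputable def dPlusOcc [DecidableEq S] (Term Tp : Finset S) (P : S → A → S → ℝ)
    (π : S → A → ℝ) (μ : S → ℝ) (s : S) : ℝ≥0∞ :=
  ∫⁻ ω, (∑' t : ℕ, if stateAt ω t = s then 1 else 0)
    ∂ (ProbabilityTheory.cond (trajMeasure Term P π μ) (SuccessEvent Tp))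

/-- Log-likelihood `Σ_{t<T} log π(Aₜ|Xₜ)` of the recorded path under policy `π`. -/
noncomputable def pathLogLik (π : S → A → ℝ) : S → List (A × S) → ℝ
  | _, [] => 0
  | s, (a, s') :: l => Real.log (π s a) + pathLogLik π s' l

/-- The cross-entropy loss
`ℓ(π) := 𝔼_{π0,μ}[ −Σ_{t<T} log π(Aₜ|Xₜ) | ∃ t, Xₜ ∈ 𝒯₊ ]`. -/
noncomputable def xent [DecidableEq S] (Term Tp : Finset S) (P : S → A → S → ℝ)
    (π0 : S → A → ℝ) (μ : S → ℝ) (π : S → A → ℝ) : ℝ :=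
  ∫ ω, -(pathLogLik π ω.init ω.steps)
    ∂ (ProbabilityTheory.cond (trajMeasure Term P π0 μ) (SuccessEvent Tp))

/-!
Let `v(s) = ℙ_{π0,s}(∃ t, Xₜ ∈ 𝒯₊)` and let `K` be the one-step kernel under `π₊`, so that `Xₜ`
has law `μ Kᵗ` under `ℙ_{π₊,μ}`. Because `v = 1_{𝒯₊}` on `𝒯` and `K` fixes terminal states, the
identity `⟪μ K^{t+1}, v⟫ = ⟪μ Kᵗ, K v⟫` reads
`ℙ(X_{t+1} ∈ 𝒯₊) + Σ_{s ∉ 𝒯} ℙ(X_{t+1} = s) v(s) = ℙ(Xₜ ∈ 𝒯₊) + Σ_{s ∉ 𝒯} ℙ(Xₜ = s) (K v)(s)`.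
Terminal states are absorbing, so `ℙ(Xₜ ∈ 𝒯₊)` increases to `ρ(π₊)`; telescoping in `ℝ≥0∞`, where
no summability is needed, and using `⟪μ, v⟫ = ρ(π0)` gives
`ρ(π₊) + Σ_{s ∉ 𝒯} d(s) v(s) = ρ(π0) + Σ_{s ∉ 𝒯} d(s) (K v)(s)`. Finally
`(K v)(s) = Σ_a π0(a|s) Q(s,a)² / V(s)`, which exceeds `V(s)` by the variance term `V(s) I(s)`.
-/

open Matrix

theorem ENNReal.tsum_list_eq_add {α : Type*} (f : List α → ℝ≥0∞) :
    ∑' l, f l = f [] + ∑' (a) (l), f (a :: l) := by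
  have hcons : Function.Injective fun p : α × List α => p.1 :: p.2 :=
    fun p q h => Prod.ext (List.cons.inj h).1 (List.cons.inj h).2
  rw [ENNReal.tsum_eq_add_tsum_ite [], ← ENNReal.tsum_prod, ← hcons.tsum_eq]
  · simp
  · rintro (_ | ⟨x, l⟩) h
    · simp at h
    · exact ⟨(x, l), rfl⟩

theorem ENNReal.iSup_add_tsum_eq_of_add_succ {u z w : ℕ → ℝ≥0∞} (hu : Monotone u)
    (h : ∀ t, u (t + 1) + z (t + 1) = u t + w t) :
    (⨆ t, u t) + ∑' t, z t = u 0 + z 0 + ∑' t, w t := by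
  have hpartial : ∀ N, u N + ∑ t ∈ Finset.range N, z (t + 1)
      = u 0 + ∑ t ∈ Finset.range N, w t := by
    intro N
    induction N with
    | zero => simp
    | succ N ih =>
      rw [Finset.sum_range_succ, Finset.sum_range_succ, ← add_assoc, add_right_comm, h,
        add_right_comm, ih, add_assoc]
  have hz : Monotone fun N => ∑ t ∈ Finset.range N, z (t + 1) :=
    fun _ _ h => Finset.sum_le_sum_of_subset (Finset.range_subset_range.2 h)
  calc (⨆ t, u t) + ∑' t, z t = z 0 + ((⨆ t, u t) + ∑' t, z (t + 1)) := by
        rw [tsum_eq_zero_add' ENNReal.summable]; ring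
    _ = z 0 + (u 0 + ∑' t, w t) := by
        congr 1
        rw [ENNReal.tsum_eq_iSup_nat, ENNReal.tsum_eq_iSup_nat,
          ENNReal.iSup_add_iSup_of_monotone hu hz, ENNReal.add_iSup]
        simp_rw [hpartial]
    _ = u 0 + z 0 + ∑' t, w t := by ring

theorem Finset.sum_mul_div_mul_eq_add_mul_sum_sq {ι : Type*} (s : Finset ι) {p q : ι → ℝ}
    {V : ℝ} (hV : V ≠ 0) (hp : ∑ i ∈ s, p i = 1) (hpq : ∑ i ∈ s, p i * q i = V) :
    ∑ i ∈ s, p i * q i / V * q i = V + V * ∑ i ∈ s, p i * ((q i - V) / V) ^ 2 := by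
  have hterm : ∀ i, p i * q i / V * q i
      = V * (p i * ((q i - V) / V) ^ 2) + 2 * (p i * q i) - V * p i := by
    intro i
    field_simp
    ring
  simp_rw [hterm, Finset.sum_sub_distrib, Finset.sum_add_distrib, ← Finset.mul_sum, hp, hpq]
  ring

theorem ENNReal.toReal_sum_mul_ofReal {ι : Type*} (s : Finset ι) {d : ι → ℝ≥0∞}
    (hd : ∀ i ∈ s, d i ≠ ⊤) {f : ι → ℝ} (hf : ∀ i ∈ s, 0 ≤ f i) :
    (∑ i ∈ s, d i * ENNReal.ofReal (f i)).toReal = ∑ i ∈ s, (d i).toReal * f i := by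
  rw [ENNReal.toReal_sum fun i hi => ENNReal.mul_ne_top (hd i hi) ENNReal.ofReal_ne_top]
  exact Finset.sum_congr rfl fun i hi => by rw [ENNReal.toReal_mul, ENNReal.toReal_ofReal (hf i hi)]

namespace Traj

def equivProd : Traj S A ≃ S × List (A × S) where
  toFun ω := (ω.init, ω.steps)
  invFun p := ⟨p.1, p.2⟩

def cons (x : S) (a : A) (ω : Traj S A) : Traj S A := ⟨x, (a, ω.init) :: ω.steps⟩

end Traj

@[simp]
lemma stateAt_zero (ω : Traj S A) : stateAt ω 0 = ω.init := rfl

@[simp]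
lemma stateAt_mk_nil (x : S) (t : ℕ) : stateAt (⟨x, []⟩ : Traj S A) t = x := by
  cases t <;> rfl

@[simp]
lemma stateAt_mk_cons_succ (x s : S) (a : A) (l : List (A × S)) (t : ℕ) :
    stateAt (⟨x, (a, s) :: l⟩ : Traj S A) (t + 1) = stateAt ⟨s, l⟩ t := by
  simp [stateAt, lastState, List.getD]

@[simp]
lemma stateAt_cons_succ (x : S) (a : A) (ω : Traj S A) (t : ℕ) :
    stateAt (ω.cons x a) (t + 1) = stateAt ω t :=
  stateAt_mk_cons_succ x ω.init a ω.steps t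

lemma cons_mem_successEvent {Tp : Finset S} {x : S} (hx : x ∉ Tp) (a : A) (ω : Traj S A) :
    ω.cons x a ∈ SuccessEvent Tp ↔ ω ∈ SuccessEvent Tp := by
  constructor
  · rintro ⟨_ | t, ht⟩
    · exact absurd ht hx
    · exact ⟨t, by simpa using ht⟩
  · rintro ⟨t, ht⟩
    exact ⟨t + 1, by simpa using ht⟩

section TrajMeasure

variable [DecidableEq S] {T : Finset S} {P : S → A → S → ℝ} {π : S → A → ℝ}

lemma trajMeasure_apply (μ : S → ℝ) (E : Set (Traj S A)) :
    trajMeasure T P π μ E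
      = ∑' (x) (l), ENNReal.ofReal (μ x * pathWeight T P π x l) * E.indicator 1 ⟨x, l⟩ := by
  rw [trajMeasure, Measure.sum_apply _ MeasurableSpace.measurableSet_top,
    ← ENNReal.tsum_prod, ← Traj.equivProd.symm.tsum_eq]
  refine tsum_congr fun p => ?_
  rw [Measure.smul_apply, Measure.dirac_apply' _ MeasurableSpace.measurableSet_top]
  rfl

lemma trajMeasure_pointMass_apply (x : S) (E : Set (Traj S A)) :
    trajMeasure T P π (pointMass x) E
      = ∑' l, ENNReal.ofReal (pathWeight T P π x l) * E.indicator 1 ⟨x, l⟩ := by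
  rw [trajMeasure_apply, tsum_eq_single x fun y hy => by simp [pointMass, hy]]
  simp [pointMass]

lemma trajMeasure_apply_eq_sum {μ : S → ℝ} (hμ : ∀ s, 0 ≤ μ s) [Fintype S]
    (E : Set (Traj S A)) :
    trajMeasure T P π μ E = ∑ x, ENNReal.ofReal (μ x) * trajMeasure T P π (pointMass x) E := by
  rw [trajMeasure_apply, tsum_fintype]
  simp_rw [trajMeasure_pointMass_apply, ← ENNReal.tsum_mul_left, ENNReal.ofReal_mul (hμ _),
    mul_assoc]

lemma ae_pathWeight_ne_zero (μ : S → ℝ) :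
    ∀ᵐ ω ∂trajMeasure T P π μ, pathWeight T P π ω.init ω.steps ≠ 0 := by
  rw [ae_iff, trajMeasure_apply]
  refine ENNReal.tsum_eq_zero.2 fun x => ENNReal.tsum_eq_zero.2 fun l => ?_
  by_cases h : pathWeight T P π x l = 0 <;> simp [h]

lemma trajMeasure_pointMass_apply_of_mem {x : S} (hx : x ∈ T) (E : Set (Traj S A)) :
    trajMeasure T P π (pointMass x) E = E.indicator 1 ⟨x, []⟩ := by
  rw [trajMeasure_pointMass_apply, ENNReal.tsum_list_eq_add]
  simp [pathWeight, hx]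

lemma trajMeasure_pointMass_le_one (hT : ∀ x, trajMeasure T P π (pointMass x) Set.univ = 1)
    (x : S) (E : Set (Traj S A)) : trajMeasure T P π (pointMass x) E ≤ 1 :=
  hT x ▸ measure_mono (Set.subset_univ E)

lemma trajMeasure_ne_top [Fintype S] (hT : ∀ x, trajMeasure T P π (pointMass x) Set.univ = 1)
    {μ : S → ℝ} (hμ : ∀ s, 0 ≤ μ s) (E : Set (Traj S A)) : trajMeasure T P π μ E ≠ ⊤ := by
  rw [trajMeasure_apply_eq_sum hμ]
  exact ENNReal.sum_ne_top.2 fun x _ => ENNReal.mul_ne_top ENNReal.ofReal_ne_top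
    (ne_top_of_le_ne_top ENNReal.one_ne_top (trajMeasure_pointMass_le_one hT x E))

end TrajMeasure

noncomputable def stepKernel [DecidableEq S] [Fintype A] (T : Finset S) (P : S → A → S → ℝ)
    (π : S → A → ℝ) : Matrix S S ℝ≥0∞ :=
  Matrix.of fun x y => if x ∈ T then (if x = y then 1 else 0)
    else ∑ a, ENNReal.ofReal (π x a * P x a y)

section Markov

variable [DecidableEq S] [Fintype S] [Fintype A] {T : Finset S} {P : S → A → S → ℝ}
  {π : S → A → ℝ}

lemma trajMeasure_pointMass_eq_sum_stepKernel {x : S} (hx : x ∉ T) (hπ : ∀ a, 0 ≤ π x a)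
    (hP : ∀ a s, 0 ≤ P x a s) {E F : Set (Traj S A)} (hEF : ∀ a, Traj.cons x a ⁻¹' E = F) :
    trajMeasure T P π (pointMass x) E
      = ∑ s, stepKernel T P π x s * trajMeasure T P π (pointMass s) F := by
  have hmk : ∀ a s l, E.indicator (1 : Traj S A → ℝ≥0∞) ⟨x, (a, s) :: l⟩
      = F.indicator 1 ⟨s, l⟩ := fun a s l => by
    rw [← hEF a]; rfl
  rw [trajMeasure_pointMass_apply, ENNReal.tsum_list_eq_add, ENNReal.tsum_prod', tsum_fintype]
  simp only [pathWeight, if_neg hx, hmk, ENNReal.ofReal_mul (mul_nonneg (hπ _) (hP _ _)),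
    ENNReal.ofReal_zero, zero_mul, zero_add, stepKernel, Matrix.of_apply,
    trajMeasure_pointMass_apply]
  simp only [tsum_fintype, Finset.sum_mul, mul_assoc, ENNReal.tsum_mul_left]
  exact Finset.sum_comm

lemma stepKernel_mulVec_of_mem {x : S} (hx : x ∈ T) (v : S → ℝ≥0∞) :
    (stepKernel T P π *ᵥ v) x = v x := by
  simp [stepKernel, Matrix.mulVec, dotProduct, hx]

lemma stepKernel_mulVec_ofReal {x : S} (hx : x ∉ T) (hπ : ∀ a, 0 ≤ π x a)
    (hP : ∀ a s, 0 ≤ P x a s) {w : S → ℝ} (hw : ∀ s, 0 ≤ w s) :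
    (stepKernel T P π *ᵥ fun s => ENNReal.ofReal (w s)) x
      = ENNReal.ofReal (∑ a, π x a * ∑ s, P x a s * w s) := by
  simp only [stepKernel, Matrix.mulVec, dotProduct, Matrix.of_apply, if_neg hx, Finset.sum_mul,
    Finset.mul_sum]
  rw [ENNReal.ofReal_sum_of_nonneg fun a _ => Finset.sum_nonneg fun s _ =>
    mul_nonneg (hπ a) (mul_nonneg (hP a s) (hw s)), Finset.sum_comm]
  refine Finset.sum_congr rfl fun a _ => ?_
  rw [ENNReal.ofReal_sum_of_nonneg fun s _ => mul_nonneg (hπ a) (mul_nonneg (hP a s) (hw s))]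
  refine Finset.sum_congr rfl fun s _ => ?_
  rw [← ENNReal.ofReal_mul (mul_nonneg (hπ a) (hP a s)), mul_assoc]

lemma trajMeasure_pointMass_stateAt_succ (hπ : ∀ s ∉ T, ∀ a, 0 ≤ π s a)
    (hP : ∀ s a s', 0 ≤ P s a s') (x s : S) (t : ℕ) :
    trajMeasure T P π (pointMass x) {ω | stateAt ω (t + 1) = s}
      = ∑ y, stepKernel T P π x y * trajMeasure T P π (pointMass y) {ω | stateAt ω t = s} := by
  by_cases hx : x ∈ T
  · simp [trajMeasure_pointMass_apply_of_mem hx, stepKernel, hx, Set.indicator]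
  · exact trajMeasure_pointMass_eq_sum_stepKernel hx (hπ x hx) (hP x) fun a => by ext; simp

lemma trajMeasure_pointMass_stateAt (hπ : ∀ s ∉ T, ∀ a, 0 ≤ π s a)
    (hP : ∀ s a s', 0 ≤ P s a s') (hT : ∀ x, trajMeasure T P π (pointMass x) Set.univ = 1)
    (t : ℕ) (x s : S) :
    trajMeasure T P π (pointMass x) {ω | stateAt ω t = s} = (stepKernel T P π ^ t) x s := by
  induction t generalizing x with
  | zero =>
    rw [pow_zero, Matrix.one_apply]
    split_ifs with h
    · rw [← hT x, trajMeasure_pointMass_apply, trajMeasure_pointMass_apply]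
      simp [h]
    · simp [trajMeasure_pointMass_apply, h]
  | succ t ih =>
    rw [trajMeasure_pointMass_stateAt_succ hπ hP, pow_succ', Matrix.mul_apply]
    simp_rw [ih]

lemma trajMeasure_stateAt {μ : S → ℝ} (hμ : ∀ s, 0 ≤ μ s) (hπ : ∀ s ∉ T, ∀ a, 0 ≤ π s a)
    (hP : ∀ s a s', 0 ≤ P s a s') (hT : ∀ x, trajMeasure T P π (pointMass x) Set.univ = 1)
    (t : ℕ) (s : S) :
    trajMeasure T P π μ {ω | stateAt ω t = s}
      = ((fun x => ENNReal.ofReal (μ x)) ᵥ* stepKernel T P π ^ t) s := by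
  simp only [trajMeasure_apply_eq_sum hμ, trajMeasure_pointMass_stateAt hπ hP hT, Matrix.vecMul,
    dotProduct]

end Markov

noncomputable def successProb [DecidableEq S] (T Tp : Finset S) (P : S → A → S → ℝ)
    (π : S → A → ℝ) (s : S) : ℝ≥0∞ :=
  trajMeasure T P π (pointMass s) (SuccessEvent Tp)

section Success

variable [DecidableEq S] {T Tp : Finset S} {P : S → A → S → ℝ} {π : S → A → ℝ}

lemma stateAt_eq_of_le_of_mem {x : S} {l : List (A × S)} (hw : pathWeight T P π x l ≠ 0)
    {t N : ℕ} (htN : t ≤ N) (ht : stateAt ⟨x, l⟩ t ∈ T) :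
    stateAt (⟨x, l⟩ : Traj S A) N = stateAt ⟨x, l⟩ t := by
  induction l generalizing x t N with
  | nil => simp
  | cons p l ih =>
    obtain ⟨a, s⟩ := p
    have hx : x ∉ T := fun hx => hw (by simp [pathWeight, hx])
    have hw' : pathWeight T P π s l ≠ 0 := fun h => hw (by simp [pathWeight, h])
    obtain _ | t := t
    · exact absurd ht hx
    obtain _ | N := N
    · omega
    simp only [stateAt_mk_cons_succ] at ht ⊢
    exact ih hw' (by omega) ht

lemma trajMeasure_stateAt_mem_eq_accumulate (hsub : Tp ⊆ T) (μ : S → ℝ) (N : ℕ) :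
    trajMeasure T P π μ {ω | stateAt ω N ∈ Tp}
      = trajMeasure T P π μ (Set.accumulate (fun t => {ω | stateAt ω t ∈ Tp}) N) := by
  refine measure_congr (Filter.Eventually.set_eq ?_)
  filter_upwards [ae_pathWeight_ne_zero μ] with ⟨x, l⟩ hw
  simp only [Set.mem_accumulate]
  refine ⟨fun h => ⟨N, le_rfl, h⟩, fun ⟨t, htN, ht⟩ => ?_⟩
  rwa [stateAt_eq_of_le_of_mem hw htN (hsub ht)]

lemma trajMeasure_successEvent_eq_iSup (hsub : Tp ⊆ T) (μ : S → ℝ) :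
    trajMeasure T P π μ (SuccessEvent Tp) = ⨆ N, trajMeasure T P π μ {ω | stateAt ω N ∈ Tp} := by
  have : SuccessEvent Tp = ⋃ t, {ω : Traj S A | stateAt ω t ∈ Tp} := by
    ext; simp [SuccessEvent]
  simp_rw [this, measure_iUnion_eq_iSup_accumulate, trajMeasure_stateAt_mem_eq_accumulate hsub]

lemma monotone_trajMeasure_stateAt_mem (hsub : Tp ⊆ T) (μ : S → ℝ) :
    Monotone fun N => trajMeasure T P π μ {ω | stateAt ω N ∈ Tp} := by
  simp_rw [trajMeasure_stateAt_mem_eq_accumulate hsub]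
  exact fun _ _ h => measure_mono (Set.monotone_accumulate h)

lemma successProb_of_mem {x : S} (hx : x ∈ T) :
    successProb T Tp P π x = if x ∈ Tp then 1 else 0 := by
  simp [successProb, trajMeasure_pointMass_apply_of_mem hx, SuccessEvent, Set.indicator]

lemma successProb_eq_ofReal_Vval (hT : ∀ x, trajMeasure T P π (pointMass x) Set.univ = 1) :
    successProb T Tp P π = fun s => ENNReal.ofReal (Vval T Tp P π s) :=
  funext fun s => (ENNReal.ofReal_toReal
    (ne_top_of_le_ne_top ENNReal.one_ne_top (trajMeasure_pointMass_le_one hT s _))).symm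

variable [Fintype S]

lemma Qval_nonneg (hP : ∀ s a s', 0 ≤ P s a s') {s : S} (a : A) : 0 ≤ Qval T Tp P π s a :=
  Finset.sum_nonneg fun _ _ => mul_nonneg (hP _ _ _) ENNReal.toReal_nonneg

variable [Fintype A]

lemma stepKernel_mulVec_successProb (hsub : Tp ⊆ T) (hπ : ∀ s ∉ T, ∀ a, 0 ≤ π s a)
    (hP : ∀ s a s', 0 ≤ P s a s') :
    stepKernel T P π *ᵥ successProb T Tp P π = successProb T Tp P π := by
  funext x
  by_cases hx : x ∈ T
  · exact stepKernel_mulVec_of_mem hx _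
  · refine (trajMeasure_pointMass_eq_sum_stepKernel hx (hπ x hx) (hP x) fun a => ?_).symm
    ext ω
    exact cons_mem_successEvent (fun h => hx (hsub h)) a ω

lemma sum_mul_Qval_eq_Vval (hsub : Tp ⊆ T) (hπ : ∀ s ∉ T, ∀ a, 0 ≤ π s a)
    (hP : ∀ s a s', 0 ≤ P s a s') (hT : ∀ x, trajMeasure T P π (pointMass x) Set.univ = 1)
    {s : S} (hs : s ∉ T) :
    ∑ a, π s a * Qval T Tp P π s a = Vval T Tp P π s := by
  have h := congrFun (stepKernel_mulVec_successProb hsub hπ hP) s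
  rw [successProb_eq_ofReal_Vval hT,
    stepKernel_mulVec_ofReal (w := Vval T Tp P π) hs (hπ s hs) (hP s)
      fun _ => ENNReal.toReal_nonneg] at h
  exact (ENNReal.ofReal_eq_ofReal_iff (Finset.sum_nonneg fun a _ => mul_nonneg (hπ s hs a)
    (Qval_nonneg hP a)) ENNReal.toReal_nonneg).1 h

end Success

section PerformanceDifference

variable [DecidableEq S] [Fintype S] [Fintype A] {T Tp : Finset S} {P : S → A → S → ℝ}
  {π : S → A → ℝ}

lemma dotProduct_eq_sum_add_sum_compl (hsub : Tp ⊆ T) (g : S → ℝ≥0∞) {v : S → ℝ≥0∞}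
    (hv : ∀ s ∈ T, v s = if s ∈ Tp then 1 else 0) :
    g ⬝ᵥ v = ∑ s ∈ Tp, g s + ∑ s ∈ Tᶜ, g s * v s := by
  rw [dotProduct, ← Finset.sum_add_sum_compl T, Finset.sum_congr rfl fun s hs => by
    rw [hv s hs, mul_ite, mul_one, mul_zero], Finset.sum_ite_mem, Finset.inter_eq_right.2 hsub]

theorem trajMeasure_successEvent_add_sum_dOcc_mul (hsub : Tp ⊆ T)
    (hπ : ∀ s ∉ T, ∀ a, 0 ≤ π s a) (hP : ∀ s a s', 0 ≤ P s a s')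
    (hT : ∀ x, trajMeasure T P π (pointMass x) Set.univ = 1) {μ : S → ℝ} (hμ : ∀ s, 0 ≤ μ s)
    {v : S → ℝ≥0∞} (hv : ∀ s ∈ T, v s = if s ∈ Tp then 1 else 0) :
    trajMeasure T P π μ (SuccessEvent Tp) + ∑ s ∈ Tᶜ, dOcc T P π μ s * v s
      = (fun s => ENNReal.ofReal (μ s)) ⬝ᵥ v
        + ∑ s ∈ Tᶜ, dOcc T P π μ s * (stepKernel T P π *ᵥ v) s := by
  set f : ℕ → S → ℝ≥0∞ := fun t => (fun x => ENNReal.ofReal (μ x)) ᵥ* stepKernel T P π ^ t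
    with hf
  have hlaw : ∀ t s, trajMeasure T P π μ {ω | stateAt ω t = s} = f t s :=
    trajMeasure_stateAt hμ hπ hP hT
  have hmem : ∀ N, trajMeasure T P π μ {ω | stateAt ω N ∈ Tp} = ∑ s ∈ Tp, f N s := fun N =>
    (sum_measure_preimage_singleton Tp fun _ _ => MeasurableSpace.measurableSet_top).symm.trans
      (Finset.sum_congr rfl fun s _ => hlaw N s)
  have hdOcc : ∀ w : S → ℝ≥0∞, ∑' t, ∑ s ∈ Tᶜ, f t s * w s = ∑ s ∈ Tᶜ, dOcc T P π μ s * w s := by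
    intro w
    rw [Summable.tsum_finsetSum fun _ _ => ENNReal.summable]
    simp_rw [ENNReal.tsum_mul_right, dOcc, hlaw]
  have hKv : ∀ s ∈ T, (stepKernel T P π *ᵥ v) s = if s ∈ Tp then 1 else 0 :=
    fun s hs => (stepKernel_mulVec_of_mem hs v).trans (hv s hs)
  have hstep : ∀ t, f (t + 1) ⬝ᵥ v = f t ⬝ᵥ (stepKernel T P π *ᵥ v) := fun t => by
    simp only [dotProduct_mulVec, hf, pow_succ, vecMul_vecMul]
  have htel := ENNReal.iSup_add_tsum_eq_of_add_succ (monotone_trajMeasure_stateAt_mem hsub μ)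
    (z := fun t => ∑ s ∈ Tᶜ, f t s * v s)
    (w := fun t => ∑ s ∈ Tᶜ, f t s * (stepKernel T P π *ᵥ v) s)
    fun t => by
      rw [hmem, hmem, ← dotProduct_eq_sum_add_sum_compl hsub _ hv,
        ← dotProduct_eq_sum_add_sum_compl hsub _ hKv, hstep]
  rw [trajMeasure_successEvent_eq_iSup hsub, ← hdOcc, ← hdOcc, htel, hmem,
    ← dotProduct_eq_sum_add_sum_compl hsub _ hv]
  simp only [hf, pow_zero, vecMul_one]

theorem performance_difference (hsub : Tp ⊆ T) (hP : ∀ s a s', 0 ≤ P s a s')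
    (hπ : ∀ s ∉ T, ∀ a, 0 ≤ π s a) (hT : ∀ x, trajMeasure T P π (pointMass x) Set.univ = 1)
    {π0 : S → A → ℝ} (hT0 : ∀ x, trajMeasure T P π0 (pointMass x) Set.univ = 1)
    {μ : S → ℝ} (hμ : ∀ s, 0 ≤ μ s) (hd : ∀ s ∉ T, dOcc T P π μ s ≠ ⊤) :
    (trajMeasure T P π μ (SuccessEvent Tp)).toReal - (trajMeasure T P π0 μ (SuccessEvent Tp)).toReal
      = ∑ s ∈ Tᶜ, (dOcc T P π μ s).toReal
          * (∑ a, π s a * Qval T Tp P π0 s a - Vval T Tp P π0 s) := by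
  have hd' : ∀ s ∈ Tᶜ, dOcc T P π μ s ≠ ⊤ := fun s hs => hd s (Finset.mem_compl.1 hs)
  have hv := successProb_eq_ofReal_Vval (Tp := Tp) hT0
  have hρ0 : (fun s => ENNReal.ofReal (μ s)) ⬝ᵥ (fun s => ENNReal.ofReal (Vval T Tp P π0 s))
      = trajMeasure T P π0 μ (SuccessEvent Tp) := by
    rw [← hv]
    exact (trajMeasure_apply_eq_sum hμ _).symm
  have hK : ∀ s ∈ Tᶜ, (stepKernel T P π *ᵥ fun s => ENNReal.ofReal (Vval T Tp P π0 s)) s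
      = ENNReal.ofReal (∑ a, π s a * Qval T Tp P π0 s a) := fun s hs =>
    stepKernel_mulVec_ofReal (Finset.mem_compl.1 hs) (hπ s (Finset.mem_compl.1 hs)) (hP s)
      fun _ => ENNReal.toReal_nonneg
  have h := trajMeasure_successEvent_add_sum_dOcc_mul hsub hπ hP hT hμ
    (v := fun s => ENNReal.ofReal (Vval T Tp P π0 s))
    fun s hs => (congrFun hv s).symm.trans (successProb_of_mem hs)
  rw [hρ0, Finset.sum_congr rfl fun s hs => congrArg (dOcc T P π μ s * ·) (hK s hs)] at h
  have h' := congrArg ENNReal.toReal h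
  rw [ENNReal.toReal_add (trajMeasure_ne_top hT hμ _) (ENNReal.sum_ne_top.2 fun s hs =>
      ENNReal.mul_ne_top (hd' s hs) ENNReal.ofReal_ne_top),
    ENNReal.toReal_add (trajMeasure_ne_top hT0 hμ _) (ENNReal.sum_ne_top.2 fun s hs =>
      ENNReal.mul_ne_top (hd' s hs) ENNReal.ofReal_ne_top),
    ENNReal.toReal_sum_mul_ofReal (f := Vval T Tp P π0) _ hd' fun _ _ => ENNReal.toReal_nonneg,
    ENNReal.toReal_sum_mul_ofReal _ hd' fun s hs => Finset.sum_nonneg fun a _ =>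
      mul_nonneg (hπ s (Finset.mem_compl.1 hs) a) (Qval_nonneg hP a)] at h'
  simp only [mul_sub, Finset.sum_sub_distrib]
  linarith

end PerformanceDifference

theorem exact_improvement_formula_general
    {S A : Type*} [Fintype S] [DecidableEq S] [Fintype A]
    (T Tp Tm : Finset S) (hpart : Tp ∪ Tm = T)
    (P : S → A → S → ℝ) (hP : ∀ s a, IsPMFOn (P s a))
    (hterm : ∀ π : S → A → ℝ, (∀ s ∉ T, IsPMFOn (π s)) →
      ∀ s : S, trajMeasure T P π (pointMass s) Set.univ = 1)
    (π0 : S → A → ℝ) (hπ0 : ∀ s ∉ T, IsPMFOn (π0 s))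
    (hV0 : ∀ s ∉ T, 0 < Vval T Tp P π0 s)
    (μ : S → ℝ) (hμ : IsPMFOn μ)
    (hd : ∀ s ∉ T, dOcc T P (piPlus T Tp P π0) μ s ≠ ⊤) :
    (trajMeasure T P (piPlus T Tp P π0) μ (SuccessEvent Tp)).toReal
        - (trajMeasure T P π0 μ (SuccessEvent Tp)).toReal
      = ∑ s ∈ Tᶜ, (dOcc T P (piPlus T Tp P π0) μ s).toReal
          * Vval T Tp P π0 s * influence T Tp P π0 s := by
  have hsub : Tp ⊆ T := hpart ▸ Finset.subset_union_left
  have hPnn : ∀ s a s', 0 ≤ P s a s' := fun s a => (hP s a).1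
  have hbellman : ∀ s ∉ T, ∑ a, π0 s a * Qval T Tp P π0 s a = Vval T Tp P π0 s :=
    fun s hs => sum_mul_Qval_eq_Vval hsub (fun s hs => (hπ0 s hs).1) hPnn (hterm π0 hπ0) hs
  have hpiPlus : ∀ s ∉ T, IsPMFOn (piPlus T Tp P π0 s) := fun s hs =>
    ⟨fun a => div_nonneg (mul_nonneg ((hπ0 s hs).1 a) (Qval_nonneg hPnn a)) (hV0 s hs).le,
      by simp only [piPlus]; rw [← Finset.sum_div, hbellman s hs, div_self (hV0 s hs).ne']⟩
  rw [performance_difference hsub hPnn (fun s hs => (hpiPlus s hs).1) (hterm _ hpiPlus)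
    (hterm π0 hπ0) hμ.1 hd]
  refine Finset.sum_congr rfl fun s hs => ?_
  have hs : s ∉ T := Finset.mem_compl.1 hs
  simp only [piPlus]
  rw [mul_assoc, Finset.sum_mul_div_mul_eq_add_mul_sum_sq _ (hV0 s hs).ne' (hπ0 s hs).2
    (hbellman s hs), influence]
  ring

/-- **Exact improvement formula.**
Episodic-MDP setup: `S` finite with terminal set `𝒯 = 𝒯₊ ∪ 𝒯₋` (disjoint), `A`
finite nonempty, transition kernel `P` (a pmf in its last argument) absorbing on
`𝒯`, every Markov policy reaching `𝒯` almost surely from every state, behavior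
policy `π0` with `V_{π0}(s) > 0` at every nonterminal `s`, and initial
distribution `μ` supported on nonterminal states.

Assume `d_{π₊}(s) < ∞` for every nonterminal state `s`.  Then
`ρ(π₊) − ρ(π0) = Σ_{s nonterminal} d_{π₊}(s)·V_{π0}(s)·I(s)`. -/
theorem exact_improvement_formula
    {S A : Type*} [Fintype S] [DecidableEq S] [Fintype A] [Nonempty A]
    (T Tp Tm : Finset S) (hpart : Tp ∪ Tm = T) (hdisj : Disjoint Tp Tm)
    (P : S → A → S → ℝ) (hP : ∀ s a, IsPMFOn (P s a))
    (habs : ∀ s ∈ T, ∀ a, P s a s = 1)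
    (hterm : ∀ π : S → A → ℝ, (∀ s ∉ T, IsPMFOn (π s)) →
      ∀ s : S, trajMeasure T P π (pointMass s) Set.univ = 1)
    (π0 : S → A → ℝ) (hπ0 : ∀ s ∉ T, IsPMFOn (π0 s))
    (hV0 : ∀ s ∉ T, 0 < Vval T Tp P π0 s)
    (μ : S → ℝ) (hμ : IsPMFOn μ) (hμT : ∀ s ∈ T, μ s = 0)
    (hd : ∀ s ∉ T, dOcc T P (piPlus T Tp P π0) μ s ≠ ⊤) :
    (trajMeasure T P (piPlus T Tp P π0) μ (SuccessEvent Tp)).toReal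
        - (trajMeasure T P π0 μ (SuccessEvent Tp)).toReal
      = ∑ s ∈ Tᶜ, (dOcc T P (piPlus T Tp P π0) μ s).toReal
          * Vval T Tp P π0 s * influence T Tp P π0 s :=
  exact_improvement_formula_general T Tp Tm hpart P hP hterm π0 hπ0 hV0 μ hμ hd
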